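/- arXiv:0708.4397 — 8 statements merged into one kernel-verified Lean document; each statement's English description precedes it below -/
import Mathlib

section
/- A group homomorphism ω' : K'¹ → ℂˣ satisfies ω'(β(x)) = ω'(x) for all x ∈ K'¹ if and only if there exists a group homomorphism ω : K¹ → ℂˣ such that ω'(x) = ω(N_{K'/K}(x)) for all x ∈ K'¹. -/
/-!
By Hilbert 90 for the cyclic extension `K'/K`, an element `x ∈ K'¹` with `N_{K'/K}(x) = 1` is
`u / β(u)` for some `u ∈ K'ˣ`. The element `A = u·α(u)` is fixed by `α` and `β`, so
`A² = N_{K/k}(A)`, while `Aⁿ = N_{K/k}(N_{K'/K}(u))`. As `n` is odd, `A⁻¹` is a norm `N_{K/k}(d)`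
with `d ∈ K`, and then `v = u·d` lies in `K'¹` with `x = v / β(v)`. Thus every `β`-invariant
character of `K'¹` kills the kernel of `N_{K'/K} : K'¹ → K¹`; it factors through the image of the
norm and extends to all of `K¹` because `ℂˣ` is divisible.
-/

open IntermediateField

theorem IsAlgClosed.units_zpow_surjective {F : Type*} [Field F] [IsAlgClosed F] {n : ℤ}
    (hn : n ≠ 0) : Function.Surjective (fun z : Fˣ => z ^ n) := by
  intro z
  obtain ⟨w, hw⟩ := IsAlgClosed.exists_pow_nat_eq (z : F) (Int.natAbs_pos.mpr hn)
  have hw0 : w ≠ 0 := by rintro rfl; simp [hn] at hw; exact z.ne_zero hw.symm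
  obtain h | h := Int.natAbs_eq n
  · refine ⟨Units.mk0 w hw0, Units.ext ?_⟩
    beta_reduce
    rw [h, zpow_natCast, Units.val_pow_eq_pow_val, Units.val_mk0, hw]
  · refine ⟨(Units.mk0 w hw0)⁻¹, Units.ext ?_⟩
    beta_reduce
    rw [h, zpow_neg, zpow_natCast, inv_pow, inv_inv, Units.val_pow_eq_pow_val, Units.val_mk0, hw]

theorem MonoidHom.exists_comp_subtype_eq {G F : Type*} [CommGroup G] [Field F] [IsAlgClosed F]
    (H : Subgroup G) (f : H →* Fˣ) : ∃ f' : G →* Fˣ, f'.comp H.subtype = f := by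
  let : DivisibleBy (Additive Fˣ) ℤ :=
    divisibleByOfSMulRightSurj _ _ fun hn => IsAlgClosed.units_zpow_surjective hn
  obtain ⟨f', hf'⟩ := (Module.Baer.of_divisible _).extension_property_addMonoidHom
    H.subtype.toAdditive Subtype.val_injective f.toAdditive
  exact ⟨MonoidHom.toAdditive.symm f', congrArg MonoidHom.toAdditive.symm hf'⟩

theorem MonoidHom.exists_comp_eq_of_ker_le {G H F : Type*} [Group G] [CommGroup H] [Field F]
    [IsAlgClosed F] (f : G →* H) (g : G →* Fˣ) (hfg : f.ker ≤ g.ker) :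
    ∃ g' : H →* Fˣ, g'.comp f = g := by
  obtain ⟨g', hg'⟩ := MonoidHom.exists_comp_subtype_eq f.range
    (f.rangeRestrict.liftOfSurjective f.rangeRestrict_surjective ⟨g, by rwa [ker_rangeRestrict]⟩)
  refine ⟨g', ?_⟩
  rw [← f.subtype_comp_rangeRestrict, ← MonoidHom.comp_assoc, hg']
  exact f.rangeRestrict.liftOfRightInverse_comp _ _ _

namespace IntermediateField

variable {k L : Type*} [Field k] [Field L] [Algebra k L] [FiniteDimensional k L]

def zpowersGen (g : Gal(L/k)) : Gal(L/fixedField (Subgroup.zpowers g)) :=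
  subgroupEquivAlgEquiv _ ⟨g, Subgroup.mem_zpowers g⟩

theorem mem_zpowers_zpowersGen (g : Gal(L/k)) (σ : Gal(L/fixedField (Subgroup.zpowers g))) :
    σ ∈ Subgroup.zpowers (zpowersGen g) := by
  obtain ⟨⟨h, m, rfl⟩, rfl⟩ := (subgroupEquivAlgEquiv (Subgroup.zpowers g)).surjective σ
  exact ⟨m, (map_zpow (subgroupEquivAlgEquiv _) _ m).symm⟩

theorem norm_fixedField_zpowers_apply (g : Gal(L/k)) (y : L) :
    Algebra.norm (fixedField (Subgroup.zpowers g)) (g y) =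
      Algebra.norm (fixedField (Subgroup.zpowers g)) y :=
  Algebra.norm_eq_of_algEquiv (zpowersGen g) y

variable [IsGalois k L]

theorem algebraMap_norm_fixedField_zpowers (g : Gal(L/k)) (y : L) :
    algebraMap (fixedField (Subgroup.zpowers g)) L
        (Algebra.norm (fixedField (Subgroup.zpowers g)) y) =
      ∏ i ∈ Finset.range (orderOf g), (g ^ i) y := by
  rw [Algebra.norm_eq_prod_automorphisms, ← Fin.prod_univ_eq_prod_range,
    ← (subgroupEquivAlgEquiv _).toEquiv.prod_comp,
    ← (finEquivZPowers (isOfFinOrder_of_finite g)).prod_comp]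
  rfl

theorem algebraMap_norm_fixedField_zpowers_of_orderOf_eq_two {g : Gal(L/k)}
    (hg : orderOf g = 2) (y : L) :
    algebraMap (fixedField (Subgroup.zpowers g)) L
      (Algebra.norm (fixedField (Subgroup.zpowers g)) y) = y * g y := by
  rw [algebraMap_norm_fixedField_zpowers, hg]
  simp [Finset.prod_range_succ]

theorem algebraMap_norm_fixedField_zpowers_of_apply_eq {g : Gal(L/k)} {y : L} (hy : g y = y) :
    algebraMap (fixedField (Subgroup.zpowers g)) L
      (Algebra.norm (fixedField (Subgroup.zpowers g)) y) = y ^ orderOf g := by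
  have hpow (i : ℕ) : (g ^ i) y = y := by
    induction i with
    | zero => rfl
    | succ i ih => rw [pow_succ, AlgEquiv.mul_apply, hy, ih]
  simp only [algebraMap_norm_fixedField_zpowers, hpow, Finset.prod_const, Finset.card_range]

theorem apply_algebraMap_norm_fixedField_zpowers {g τ : Gal(L/k)} (hτg : Commute τ g) (y : L) :
    τ (algebraMap (fixedField (Subgroup.zpowers g)) L
        (Algebra.norm (fixedField (Subgroup.zpowers g)) y)) =
      algebraMap (fixedField (Subgroup.zpowers g)) L
        (Algebra.norm (fixedField (Subgroup.zpowers g)) (τ y)) := by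
  simp only [algebraMap_norm_fixedField_zpowers, map_prod, ← AlgEquiv.mul_apply,
    (hτg.pow_right _).eq]

end IntermediateField

theorem IntermediateField.exists_div_apply_eq_of_norm_fixedField_zpowers_eq_one {k L : Type}
    [Field k] [Field L] [Algebra k L] [FiniteDimensional k L] [IsGalois k L] (g : Gal(L/k))
    {x : L} (hx : Algebra.norm (fixedField (Subgroup.zpowers g)) x = 1) :
    ∃ u : Lˣ, u / g u = x :=
  have : IsCyclic Gal(L/fixedField (Subgroup.zpowers g)) :=
    ⟨⟨zpowersGen g, mem_zpowers_zpowersGen g⟩⟩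
  groupCohomology.exists_div_of_norm_eq_one (mem_zpowers_zpowersGen g) hx

theorem AlgEquiv.mul_apply_eq_inv_of_pow_eq {k L : Type*} [Field k] [Field L] [Algebra k L]
    (α : L ≃ₐ[k] L) {A t : L} {s : ℕ} (hA : A ≠ 0) (hαA : α A = A)
    (ht : A ^ (2 * s + 1) = t * α t) :
    t⁻¹ * A ^ s * α (t⁻¹ * A ^ s) = A⁻¹ := by
  rw [map_mul, map_inv₀, map_pow, hαA,
    show t⁻¹ * A ^ s * ((α t)⁻¹ * A ^ s) = (t * α t)⁻¹ * A ^ (2 * s) by ring, ← ht, pow_succ]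
  field_simp

theorem exists_mul_apply_eq_one_and_div_smul_eq {k L : Type} [Field k] [Field L] [Algebra k L]
    [FiniteDimensional k L] [IsGalois k L] {α β : Gal(L/k)} (hαβ : Commute α β)
    (hα : orderOf α = 2) (hβ : Odd (orderOf β)) {x : Lˣ} (hx : (x : L) * α x = 1)
    (hNx : Algebra.norm (fixedField (Subgroup.zpowers β)) (x : L) = 1) :
    ∃ v : Lˣ, (v : L) * α v = 1 ∧ v / β • v = x := by
  obtain ⟨u, hu⟩ := exists_div_apply_eq_of_norm_fixedField_zpowers_eq_one β hNx
  rw [← hu] at hx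
  have hα2 (y : L) : α (α y) = y := by
    rw [← AlgEquiv.mul_apply, ← pow_two, ← hα, pow_orderOf_eq_one, AlgEquiv.one_apply]
  have hαβy (y : L) : α (β y) = β (α y) := congrArg (· y) hαβ.eq
  set A := (u : L) * α u with hA
  have hA0 : A ≠ 0 := mul_ne_zero u.ne_zero (by simp)
  have hαA : α A = A := by rw [hA, map_mul, hα2, mul_comm]
  have hβA : β A = A := by
    rw [map_div₀, div_mul_div_comm, hαβy, div_eq_one_iff_eq (by simp)] at hx
    rw [hA, map_mul, ← hx]
  set t := algebraMap (fixedField (Subgroup.zpowers β)) L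
    (Algebra.norm (fixedField (Subgroup.zpowers β)) (u : L))
  have hβt : β t = t :=
    (Algebra.norm (fixedField (Subgroup.zpowers β)) (u : L)).2 ⟨β, Subgroup.mem_zpowers β⟩
  have ht : A ^ orderOf β = t * α t := by
    rw [← algebraMap_norm_fixedField_zpowers_of_apply_eq hβA,
      apply_algebraMap_norm_fixedField_zpowers hαβ, ← map_mul, ← map_mul]
  obtain ⟨s, hs⟩ := hβ
  rw [hs] at ht
  set d := t⁻¹ * A ^ s
  have hd : d * α d = A⁻¹ := α.mul_apply_eq_inv_of_pow_eq hA0 hαA ht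
  have hd0 : d ≠ 0 := by
    rintro h
    rw [h, zero_mul, eq_comm, inv_eq_zero] at hd
    exact hA0 hd
  refine ⟨u * Units.mk0 d hd0, ?_, ?_⟩
  · simp only [Units.val_mul, Units.val_mk0, map_mul]
    calc (u : L) * d * (α u * α d) = A * (d * α d) := by ring
      _ = 1 := by rw [hd, mul_inv_cancel₀ hA0]
  · have hβd : β d = d := by simp [d, hβt, hβA]
    ext
    simp [← hu, hβd]
    field_simp

theorem exists_eq_div_of_norm_fixedField_zpowers_eq_one {k L : Type} [Field k] [Field L]
    [Algebra k L] [FiniteDimensional k L] [IsGalois k L] {α β : Gal(L/k)} (hαβ : Commute α β)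
    (hα : orderOf α = 2) (hβ : Odd (orderOf β)) (S : Subgroup Lˣ)
    (hS : ∀ y : Lˣ, y ∈ S ↔ (y : L) * α y = 1) {x : S}
    (hNx : Algebra.norm (fixedField (Subgroup.zpowers β)) ((x : Lˣ) : L) = 1) :
    ∃ v w : S, ((w : Lˣ) : L) = β ((v : Lˣ) : L) ∧ x = v / w := by
  obtain ⟨v, hv, hvx⟩ := exists_mul_apply_eq_one_and_div_smul_eq hαβ hα hβ ((hS x).1 x.2) hNx
  have hβv : β • v ∈ S := by
    rw [hS]
    change β (v : L) * (α * β) v = 1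
    rw [hαβ.eq, AlgEquiv.mul_apply, ← map_mul, hv, map_one]
  exact ⟨⟨v, (hS v).2 hv⟩, ⟨β • v, hβv⟩, rfl, Subtype.ext hvx.symm⟩

theorem stmt_1_general
    (k : Type) [Field k]
    (K' : Type) [Field K'] [Algebra k K'] [FiniteDimensional k K'] [IsGalois k K']
    (n : ℕ) (hodd : Odd n)
    (α β : K' ≃ₐ[k] K')
    (hcomm : α * β = β * α)
    (hordα : orderOf α = 2) (hordβ : orderOf β = n)
    (K : IntermediateField k K') (hK : K = fixedField (Subgroup.zpowers β))
    (k' : IntermediateField k K') (hk' : k' = fixedField (Subgroup.zpowers α))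
    (K1 : Subgroup (↥K)ˣ)
    (hK1 : ∀ x : (↥K)ˣ, x ∈ K1 ↔ Algebra.norm k (x : ↥K) = 1)
    (K1' : Subgroup K'ˣ)
    (hK1' : ∀ y : K'ˣ, y ∈ K1' ↔ Algebra.norm (↥k') (y : K') = 1)
    (ω' : K1' →* ℂˣ) :
    (∀ x y : K1', ((y : K'ˣ) : K') = β ((x : K'ˣ) : K') → ω' y = ω' x) ↔
      (∃ ω : K1 →* ℂˣ, ∀ (x : K1') (z : K1),
        ((z : (↥K)ˣ) : ↥K) = Algebra.norm (↥K) ((x : K'ˣ) : K') → ω' x = ω z) := by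
  subst hK hk' hordβ
  have hK1'_iff (y : K'ˣ) : y ∈ K1' ↔ (y : K') * α y = 1 := by
    rw [hK1', ← algebraMap_norm_fixedField_zpowers_of_orderOf_eq_two hordα,
      (FaithfulSMul.algebraMap_injective _ K').eq_iff.symm, map_one]
  have hNK1 (x : K1') :
      Units.map (Algebra.norm (fixedField (Subgroup.zpowers β)) : K' →* _) x ∈ K1 := by
    rw [hK1, Units.coe_map, Algebra.norm_norm,
      ← Algebra.norm_norm (S := fixedField (Subgroup.zpowers α)), (hK1' x).1 x.2, map_one]
  let N : K1' →* K1 := ((Units.map (Algebra.norm _ : K' →* _)).comp K1'.subtype).codRestrict K1 hNK1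
  constructor
  · intro hinv
    have hker : N.ker ≤ ω'.ker := fun x hx => by
      obtain ⟨v, w, hw, rfl⟩ := exists_eq_div_of_norm_fixedField_zpowers_eq_one hcomm hordα hodd
        K1' hK1'_iff (Units.ext_iff.1 (Subtype.ext_iff.1 hx))
      rw [MonoidHom.mem_ker, map_div, hinv v w hw, div_self']
    obtain ⟨ω, hω⟩ := N.exists_comp_eq_of_ker_le ω' hker
    refine ⟨ω, fun x z hz => ?_⟩
    rw [show z = N x from Subtype.ext (Units.ext hz), ← hω, MonoidHom.comp_apply]
  · rintro ⟨ω, hω⟩ x y hxy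
    rw [hω x (N x) rfl, hω y (N x)]
    change Algebra.norm _ ((x : K'ˣ) : K') = Algebra.norm _ ((y : K'ˣ) : K')
    rw [hxy, norm_fixedField_zpowers_apply]

theorem stmt_1 (p : ℕ) [Fact p.Prime]
    (k : Type) [Field k] [Algebra ℚ_[p] k] [FiniteDimensional ℚ_[p] k]
    (K' : Type) [Field K'] [Algebra k K'] [FiniteDimensional k K'] [IsGalois k K']
    (n : ℕ) (hodd : Odd n)
    (α β : K' ≃ₐ[k] K')
    (hcomm : α * β = β * α)
    (hordα : orderOf α = 2) (hordβ : orderOf β = n)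
    (hcard : Nat.card (K' ≃ₐ[k] K') = 2 * n)
    (hgen : ∀ g : K' ≃ₐ[k] K', g ∈ Subgroup.closure ({α, β} : Set (K' ≃ₐ[k] K')))
    (K : IntermediateField k K') (hK : K = fixedField (Subgroup.zpowers β))
    (k' : IntermediateField k K') (hk' : k' = fixedField (Subgroup.zpowers α))
    (K1 : Subgroup (↥K)ˣ)
    (hK1 : ∀ x : (↥K)ˣ, x ∈ K1 ↔ Algebra.norm k (x : ↥K) = 1)
    (K1' : Subgroup K'ˣ)
    (hK1' : ∀ y : K'ˣ, y ∈ K1' ↔ Algebra.norm (↥k') (y : K') = 1)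
    (ω' : K1' →* ℂˣ) :
    (∀ x y : K1', ((y : K'ˣ) : K') = β ((x : K'ˣ) : K') → ω' y = ω' x) ↔
      (∃ ω : K1 →* ℂˣ, ∀ (x : K1') (z : K1),
        ((z : (↥K)ˣ) : ↥K) = Algebra.norm (↥K) ((x : K'ˣ) : K') → ω' x = ω z) :=
  stmt_1_general k K' n hodd α β hcomm hordα hordβ K hK k' hk' K1 hK1 K1' hK1' ω'
end

section
/- If an element c ∈ kˣ lies in N_{K'/K}(K'ˣ), then c lies in N_{k'/k}(k'ˣ); equivalently, the homomorphism kˣ/N_{k'/k}(k'ˣ) → Kˣ/N_{K'/K}(K'ˣ) induced by the inclusion k ⊆ K is injective. -/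
/-!
If `c = N_{K'/K}(y)`, then by transitivity of norms `N_{k'/k}(N_{K'/k'}(y)) = N_{K'/k}(y) = c ^ [K : k]`,
while `N_{k'/k}(c) = c ^ [k' : k]`. Since `[K : k] = 2` and `[k' : k] = n` are coprime, a
Bézout combination of these two norms has norm `c`.
-/

open IntermediateField Module

namespace Algebra

section Field

variable {F E : Type*} [Field F] [Field E] [Algebra F E] [FiniteDimensional F E]

theorem mem_range_norm_of_pow_mem_of_coprime {a b : ℕ} (hab : a.Coprime b) {c : F}
    (ha : c ^ a ∈ Set.range (norm F : E → F)) (hb : c ^ b ∈ Set.range (norm F : E → F)) :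
    c ∈ Set.range (norm F : E → F) := by
  obtain ⟨x, hx⟩ := ha
  obtain ⟨y, hy⟩ := hb
  rcases eq_or_ne c 0 with rfl | hc
  · exact ⟨0, norm_zero⟩
  refine ⟨x ^ a.gcdA b * y ^ a.gcdB b, ?_⟩
  calc norm F (x ^ a.gcdA b * y ^ a.gcdB b)
      = (c ^ a) ^ a.gcdA b * (c ^ b) ^ a.gcdB b := by rw [map_mul, norm_zpow, norm_zpow, hx, hy]
    _ = c ^ (a.gcd b : ℤ) := by
      rw [Nat.gcd_eq_gcd_ab, zpow_add₀ hc, zpow_mul, zpow_mul, zpow_natCast, zpow_natCast]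
    _ = c := by rw [hab, Nat.cast_one, zpow_one]

end Field

variable {F L : Type*} [Field F] [Field L] [Algebra F L] [FiniteDimensional F L]

theorem pow_finrank_mem_range_norm (E E' : IntermediateField F L) {c : F}
    (hc : algebraMap F E c ∈ Set.range (norm E : L → E)) :
    c ^ finrank F E ∈ Set.range (norm F : E' → F) := by
  obtain ⟨y, hy⟩ := hc
  exact ⟨norm E' y, by rw [norm_norm, ← norm_norm (S := E), hy, Algebra.norm_algebraMap]⟩

theorem mem_range_norm_of_coprime_finrank (E E' : IntermediateField F L)
    (hEE' : (finrank F E).Coprime (finrank F E')) {c : F}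
    (hc : algebraMap F E c ∈ Set.range (norm E : L → E)) :
    c ∈ Set.range (norm F : E' → F) :=
  mem_range_norm_of_pow_mem_of_coprime hEE' (pow_finrank_mem_range_norm E E' hc)
    ⟨algebraMap F E' c, Algebra.norm_algebraMap c⟩

end Algebra

theorem IntermediateField.finrank_fixedField_zpowers_mul_orderOf {F L : Type*} [Field F] [Field L]
    [Algebra F L] [FiniteDimensional F L] (σ : L ≃ₐ[F] L) :
    finrank F (fixedField (Subgroup.zpowers σ)) * orderOf σ = finrank F L := by
  rw [← Nat.card_zpowers, ← finrank_fixedField_eq_card, finrank_mul_finrank]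

theorem stmt_3_general
    (k : Type) [Field k]
    (K' : Type) [Field K'] [Algebra k K'] [FiniteDimensional k K'] [IsGalois k K']
    (n : ℕ) (hodd : Odd n)
    (α β : K' ≃ₐ[k] K')
    (hordα : orderOf α = 2) (hordβ : orderOf β = n)
    (hcard : Nat.card (K' ≃ₐ[k] K') = 2 * n)
    (K : IntermediateField k K') (hK : K = fixedField (Subgroup.zpowers β))
    (k' : IntermediateField k K') (hk' : k' = fixedField (Subgroup.zpowers α))
    (c : k)
    (h : ∃ y : K', Algebra.norm (↥K) y = algebraMap k (↥K) c) :
    ∃ z : k', Algebra.norm k z = c := by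
  have hn : 0 < n := hodd.pos
  have hdeg : finrank k K' = 2 * n := (IsGalois.card_aut_eq_finrank k K').symm.trans hcard
  have hK2 : finrank k K = 2 := by
    have := finrank_fixedField_zpowers_mul_orderOf β
    rw [← hK, hordβ, hdeg] at this
    exact Nat.eq_of_mul_eq_mul_right hn this
  have hk'n : finrank k k' = n := by
    have := finrank_fixedField_zpowers_mul_orderOf α
    rw [← hk', hordα, hdeg] at this
    omega
  refine Algebra.mem_range_norm_of_coprime_finrank K k' ?_ h
  rw [hK2, hk'n]
  exact Nat.coprime_two_left.mpr hodd

theorem stmt_3 (p : ℕ) [Fact p.Prime]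
    (k : Type) [Field k] [Algebra ℚ_[p] k] [FiniteDimensional ℚ_[p] k]
    (K' : Type) [Field K'] [Algebra k K'] [FiniteDimensional k K'] [IsGalois k K']
    (n : ℕ) (hodd : Odd n)
    (α β : K' ≃ₐ[k] K')
    (hcomm : α * β = β * α)
    (hordα : orderOf α = 2) (hordβ : orderOf β = n)
    (hcard : Nat.card (K' ≃ₐ[k] K') = 2 * n)
    (hgen : ∀ g : K' ≃ₐ[k] K', g ∈ Subgroup.closure ({α, β} : Set (K' ≃ₐ[k] K')))
    (K : IntermediateField k K') (hK : K = fixedField (Subgroup.zpowers β))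
    (k' : IntermediateField k K') (hk' : k' = fixedField (Subgroup.zpowers α))
    (c : k) (hc : c ≠ 0)
    (h : ∃ y : K', Algebra.norm (↥K) y = algebraMap k (↥K) c) :
    ∃ z : k', Algebra.norm k z = c :=
  stmt_3_general k K' n hodd α β hordα hordβ hcard K hK k' hk' c h
end

section
/- For every c ∈ kˣ, c is a norm from K (i.e. c ∈ N_{K/k}(Kˣ)) if and only if c, viewed as an element of k'ˣ, is a norm from K' (i.e. c ∈ N_{K'/k'}(K'ˣ)). Equivalently, the quadratic character of kˣ attached to the quadratic extension K/k and the quadratic character of k'ˣ attached to K'/k' agree on kˣ. -/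
/-!
The degrees `[K : k] = 2` and `[k' : k] = n` are coprime, so `K` and `k'` are linearly disjoint
with compositum `K'`; hence `N_{K'/k'}` restricts to `N_{K/k}` on `K`, which gives one direction.
Conversely, if `c = N_{K'/k'}(y)` then `c ^ n = N_{k'/k}(c) = N_{K'/k}(y) = N_{K/k}(N_{K'/K}(y))`,
and since `c ^ 2 = N_{K/k}(c)` and `n` is odd, `c` itself is a norm from `K`.
-/

open IntermediateField Module

theorem Algebra.exists_norm_eq_of_odd_pow {F E : Type*} [Field F] [Field E] [Algebra F E]
    (hE : finrank F E = 2) {n : ℕ} (hn : Odd n) {c : F}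
    (h : ∃ z : E, Algebra.norm F z = c ^ n) : ∃ x : E, Algebra.norm F x = c := by
  have : FiniteDimensional F E := Module.finite_of_finrank_eq_succ hE
  obtain ⟨z, hz⟩ := h
  obtain ⟨m, rfl⟩ := hn
  rcases eq_or_ne c 0 with rfl | hc
  · exact ⟨0, Algebra.norm_zero⟩
  -- `c = c ^ (2m+1) * (c ^ 2)⁻¹ ^ m`, and `c ^ 2` is the norm of `c` viewed in `E`
  refine ⟨z * (algebraMap F E c⁻¹) ^ m, ?_⟩
  rw [map_mul, map_pow, Algebra.norm_algebraMap, hz, hE, ← pow_mul, pow_succ', mul_assoc, ← mul_pow, mul_inv_cancel₀ hc, one_pow, mul_one]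

theorem Algebra.norm_eq_pow_finrank_of_norm_eq_algebraMap {F M L : Type*} [Field F] [Field M]
    [Field L] [Algebra F M] [Algebra M L] [Algebra F L] [IsScalarTower F M L]
    [FiniteDimensional F M] [FiniteDimensional M L] {y : L} {c : F}
    (h : Algebra.norm M y = algebraMap F M c) : Algebra.norm F y = c ^ finrank F M := by
  rw [← Algebra.norm_norm (S := M), h, Algebra.norm_algebraMap]

theorem IntermediateField.norm_algebraMap_of_finrank_coprime {F E : Type*} [Field F] [Field E]
    [Algebra F E] [FiniteDimensional F E] {A B : IntermediateField F E}
    (hcop : (finrank F A).Coprime (finrank F B))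
    (hmul : finrank F A * finrank F B = finrank F E) (x : B) :
    Algebra.norm A (algebraMap B E x) = algebraMap F A (Algebra.norm F x) := by
  have hAB := LinearDisjoint.of_finrank_coprime hcop
  refine hAB.norm_algebraMap ?_ x
  refine eq_of_le_of_finrank_eq le_top ?_
  rw [hAB.finrank_sup, hmul, finrank_top']

theorem IntermediateField.finrank_fixedField_zpowers {F E : Type*} [Field F] [Field E]
    [Algebra F E] [FiniteDimensional F E] (σ : E ≃ₐ[F] E) :
    finrank (fixedField (Subgroup.zpowers σ)) E = orderOf σ := by
  rw [finrank_fixedField_eq_card, Nat.card_zpowers]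

theorem stmt_5_general
    (k : Type) [Field k]
    (K' : Type) [Field K'] [Algebra k K'] [FiniteDimensional k K'] [IsGalois k K']
    (n : ℕ) (hodd : Odd n)
    (α β : K' ≃ₐ[k] K')
    (hordα : orderOf α = 2) (hordβ : orderOf β = n)
    (hcard : Nat.card (K' ≃ₐ[k] K') = 2 * n)
    (K : IntermediateField k K') (hK : K = fixedField (Subgroup.zpowers β))
    (k' : IntermediateField k K') (hk' : k' = fixedField (Subgroup.zpowers α))
    (c : k) :
    (∃ x : K, Algebra.norm k x = c) ↔
      (∃ y : K', Algebra.norm (↥k') y = algebraMap k (↥k') c) := by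
  have hK'k : finrank k K' = 2 * n := by rw [← IsGalois.card_aut_eq_finrank, hcard]
  have hK'K : finrank K K' = n := by rw [hK, finrank_fixedField_zpowers, hordβ]
  have hK'k' : finrank k' K' = 2 := by rw [hk', finrank_fixedField_zpowers, hordα]
  have hKk : finrank k K = 2 := by
    have := finrank_mul_finrank k K K'
    rw [hK'K, hK'k] at this
    exact Nat.eq_of_mul_eq_mul_right hodd.pos this
  have hk'k : finrank k k' = n := by
    have := finrank_mul_finrank k k' K'
    rw [hK'k', hK'k, mul_comm 2] at this
    exact Nat.eq_of_mul_eq_mul_right two_pos this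
  constructor
  · rintro ⟨x, rfl⟩
    refine ⟨algebraMap K K' x, norm_algebraMap_of_finrank_coprime ?_ ?_ x⟩
    · rw [hk'k, hKk]
      exact Nat.coprime_two_right.mpr hodd
    · rw [hk'k, hKk, hK'k, mul_comm]
  · rintro ⟨y, hy⟩
    refine Algebra.exists_norm_eq_of_odd_pow hKk hodd ⟨Algebra.norm K y, ?_⟩
    rw [Algebra.norm_norm, Algebra.norm_eq_pow_finrank_of_norm_eq_algebraMap hy, hk'k]

theorem stmt_5 (p : ℕ) [Fact p.Prime]
    (k : Type) [Field k] [Algebra ℚ_[p] k] [FiniteDimensional ℚ_[p] k]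
    (K' : Type) [Field K'] [Algebra k K'] [FiniteDimensional k K'] [IsGalois k K']
    (n : ℕ) (hodd : Odd n)
    (α β : K' ≃ₐ[k] K')
    (hcomm : α * β = β * α)
    (hordα : orderOf α = 2) (hordβ : orderOf β = n)
    (hcard : Nat.card (K' ≃ₐ[k] K') = 2 * n)
    (hgen : ∀ g : K' ≃ₐ[k] K', g ∈ Subgroup.closure ({α, β} : Set (K' ≃ₐ[k] K')))
    (K : IntermediateField k K') (hK : K = fixedField (Subgroup.zpowers β))
    (k' : IntermediateField k K') (hk' : k' = fixedField (Subgroup.zpowers α))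
    (c : k) (hc : c ≠ 0) :
    (∃ x : K, Algebra.norm k x = c) ↔
      (∃ y : K', Algebra.norm (↥k') y = algebraMap k (↥k') c) :=
  stmt_5_general k K' n hodd α β hordα hordβ hcard K hK k' hk' c
end

section
/- A group homomorphism χ : E'ˣ → ℂˣ satisfies χ(β(z)) = χ(z) for all z ∈ E'ˣ if and only if there exists a group homomorphism ω : Eˣ → ℂˣ such that χ(z) = ω(N_{E'/E}(z)) for all z ∈ E'ˣ. -/
/-!
If `χ` is `β`-invariant it kills every `β y / y`. By Hilbert's Theorem 90 these are exactly the
units of norm one (the cyclic form follows from Noether's cocycle form applied to the cocycle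
`β ^ k ↦ ∏_{j<k} β ^ j x`, well defined because `N(x) = 1`). So `χ` factors through the norm
onto its image in `Eˣ`, and the factored character extends to all of `Eˣ` because `ℂˣ` is
divisible, i.e. an injective `ℤ`-module. Conversely `N ∘ β = N`.
-/

theorem IsAlgClosed.units_pow_surjective (K : Type*) [Field K] [IsAlgClosed K] {n : ℕ}
    (hn : n ≠ 0) : Function.Surjective fun u : Kˣ ↦ u ^ n := fun u ↦ by
  obtain ⟨z, hz⟩ := IsAlgClosed.exists_pow_nat_eq (u : K) (Nat.pos_of_ne_zero hn)
  have hz₀ : z ≠ 0 := by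
    rintro rfl
    exact u.ne_zero (by rw [← hz, zero_pow hn])
  exact ⟨Units.mk0 z hz₀, Units.ext (by simp [hz])⟩

noncomputable instance IsAlgClosed.rootableByUnits (K : Type*) [Field K] [IsAlgClosed K] :
    RootableBy Kˣ ℤ :=
  @Group.rootableByIntOfRootableByNat _ _
    (rootableByOfPowLeftSurj _ _ (IsAlgClosed.units_pow_surjective K))

noncomputable instance Additive.divisibleByInt (A : Type*) [CommGroup A] [RootableBy A ℤ] :
    DivisibleBy (Additive A) ℤ where
  div a n := Additive.ofMul (RootableBy.root a.toMul n)
  div_zero a := congrArg Additive.ofMul (RootableBy.root_zero a.toMul)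
  div_cancel a hn := congrArg Additive.ofMul (RootableBy.root_cancel a.toMul hn)

theorem MonoidHom.exists_comp_eq_of_injective {M N A : Type*} [CommGroup M] [CommGroup N]
    [CommGroup A] [RootableBy A ℤ] (f : M →* N) (hf : Function.Injective f) (g : M →* A) :
    ∃ h : N →* A, h.comp f = g := by
  obtain ⟨h, hh⟩ := (Module.Baer.of_divisible (Additive A)).extension_property_addMonoidHom
    (MonoidHom.toAdditive f) hf (MonoidHom.toAdditive g)
  exact ⟨MonoidHom.toAdditive.symm h, MonoidHom.ext fun x ↦ DFunLike.congr_fun hh x⟩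

theorem MonoidHom.exists_comp_eq_of_ker_le_s6 {G G' A : Type*} [CommGroup G] [CommGroup G']
    [CommGroup A] [RootableBy A ℤ] (f : G →* G') (g : G →* A) (hfg : f.ker ≤ g.ker) :
    ∃ h : G' →* A, h.comp f = g := by
  obtain ⟨h, hh⟩ := (QuotientGroup.kerLift f).exists_comp_eq_of_injective
    (QuotientGroup.kerLift_injective f) (QuotientGroup.lift f.ker g hfg)
  exact ⟨h, MonoidHom.ext fun x ↦ DFunLike.congr_fun hh (x : G ⧸ f.ker)⟩

section PartialNorm

variable {G M : Type*}

def partialNorm [Monoid G] [CommMonoid M] [MulAction G M] (σ : G) (x : M) (k : ℕ) : M :=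
  ∏ j ∈ Finset.range k, (σ ^ j) • x

variable [Group G] [CommGroup M] [MulDistribMulAction G M] {σ : G} {x : M}

theorem partialNorm_one : partialNorm σ x 1 = x := by
  simp [partialNorm]

theorem partialNorm_add (a b : ℕ) :
    partialNorm σ x (a + b) = partialNorm σ x a * σ ^ a • partialNorm σ x b := by
  simp only [partialNorm, Finset.prod_range_add, Finset.smul_prod', pow_add, mul_smul]

theorem partialNorm_eq_of_pow_eq (hx : partialNorm σ x (orderOf σ) = 1) {a b : ℕ}
    (h : σ ^ a = σ ^ b) : partialNorm σ x a = partialNorm σ x b := by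
  have hper : Function.Periodic (partialNorm σ x) (orderOf σ) := fun a ↦ by
    rw [partialNorm_add, hx, smul_one, mul_one]
  rw [← hper.map_mod_nat a, ← hper.map_mod_nat b, pow_eq_pow_iff_modEq.mp h]

theorem exists_isMulCocycle₁_apply_eq (hσ : ∀ g : G, g ∈ Submonoid.powers σ)
    (hx : partialNorm σ x (orderOf σ) = 1) :
    ∃ f : G → M, groupCohomology.IsMulCocycle₁ f ∧ f σ = x := by
  choose k hk using hσ
  replace hk (g : G) : σ ^ k g = g := hk g
  refine ⟨fun g ↦ partialNorm σ x (k g), fun g h ↦ ?_, ?_⟩ <;> dsimp only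
  · rw [partialNorm_eq_of_pow_eq hx (b := k g + k h) (by rw [hk, pow_add, hk, hk]),
      partialNorm_add, hk, mul_comm]
  · rw [partialNorm_eq_of_pow_eq hx (b := 1) (by rw [hk, pow_one]), partialNorm_one]

end PartialNorm

section CyclicGalois

variable {K L : Type*} [Field K] [Field L] [Algebra K L] [FiniteDimensional K L]
  {σ : L ≃ₐ[K] L}

theorem val_partialNorm_orderOf [IsGalois K L] (hσ : ∀ g : L ≃ₐ[K] L, g ∈ Subgroup.zpowers σ)
    (x : Lˣ) :
    ((partialNorm σ x (orderOf σ) : Lˣ) : L) = algebraMap K L (Algebra.norm K (x : L)) := by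
  classical
  rw [Algebra.norm_eq_prod_automorphisms, ← IsCyclic.image_range_orderOf hσ,
    Finset.prod_image fun i hi j hj h ↦ pow_injOn_Iio_orderOf
      (Finset.mem_range.mp hi) (Finset.mem_range.mp hj) h]
  simp [partialNorm]

theorem exists_unitsMap_div_eq_of_norm_eq_one [IsGalois K L]
    (hσ : ∀ g : L ≃ₐ[K] L, g ∈ Subgroup.zpowers σ) {x : Lˣ}
    (hx : Algebra.norm K (x : L) = 1) : ∃ y : Lˣ, Units.map (σ : L →* L) y / y = x := by
  have hpowers (g : L ≃ₐ[K] L) : g ∈ Submonoid.powers σ :=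
    (isOfFinOrder_of_finite σ).mem_powers_iff_mem_zpowers.mpr (hσ g)
  obtain ⟨f, hf, hfσ⟩ := exists_isMulCocycle₁_apply_eq (x := x) hpowers
    (Units.ext (by rw [val_partialNorm_orderOf hσ, hx, map_one, Units.val_one]))
  obtain ⟨y, hy⟩ := groupCohomology.isMulCoboundary₁_of_isMulCocycle₁_of_aut_to_units f hf
  exact ⟨y, by rw [← hfσ, ← hy σ, AlgEquiv.smul_units_def]⟩

theorem ker_unitsMap_norm_le_ker [IsGalois K L] {A : Type*} [CommGroup A]
    (hσ : ∀ g : L ≃ₐ[K] L, g ∈ Subgroup.zpowers σ) {χ : Lˣ →* A}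
    (hχ : ∀ z : Lˣ, χ (Units.map (σ : L →* L) z) = χ z) :
    (Units.map (Algebra.norm K : L →* K)).ker ≤ χ.ker := fun z hz ↦ by
  obtain ⟨y, rfl⟩ := exists_unitsMap_div_eq_of_norm_eq_one hσ
    (congrArg Units.val (MonoidHom.mem_ker.mp hz))
  rw [MonoidHom.mem_ker, map_div, hχ, div_self']

end CyclicGalois

theorem stmt_6 (E E' : Type*) [Field E] [Field E'] [Algebra E E']
    [FiniteDimensional E E'] [IsGalois E E']
    (β : E' ≃ₐ[E] E')
    (hgen : ∀ g : E' ≃ₐ[E] E', g ∈ Subgroup.zpowers β)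
    (χ : E'ˣ →* ℂˣ) :
    (∀ z : E'ˣ, χ (Units.map (β : E' →* E') z) = χ z) ↔
      ∃ ω : Eˣ →* ℂˣ, ∀ z : E'ˣ, χ z = ω (Units.map (Algebra.norm E : E' →* E) z) := by
  constructor
  · intro hχ
    obtain ⟨ω, hω⟩ := MonoidHom.exists_comp_eq_of_ker_le_s6 _ χ (ker_unitsMap_norm_le_ker hgen hχ)
    exact ⟨ω, fun z ↦ (DFunLike.congr_fun hω z).symm⟩
  · rintro ⟨ω, hω⟩ z
    rw [hω, hω]
    congr 1
    exact Units.ext (Algebra.norm_eq_of_algEquiv β z)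
end

section
/- Let μ : A → ℂˣ be a group homomorphism such that μ(x)·μ(α(β(x))) = 1 for every x ∈ A. Then μ(β(x)) = μ(x) for all x ∈ A, and μ(α(x)) = μ(x)⁻¹ for all x ∈ A. -/
theorem stmt_7 {A : Type*} [Group A] (n : ℕ) (hn : Odd n) (hpos : 0 < n)
    (α β : MulAut A)
    (hcomm : α * β = β * α) (hα : α ^ 2 = 1) (hβ : β ^ n = 1)
    (μ : A →* ℂˣ) (hμ : ∀ x : A, μ x * μ (α (β x)) = 1) :
    (∀ x : A, μ (β x) = μ x) ∧ (∀ x : A, μ (α x) = (μ x)⁻¹) := by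
  have h1 : ∀ x : A, μ ((α * β) x) = (μ x)⁻¹ := by
    intro x
    show μ (α (β x)) = (μ x)⁻¹
    exact eq_inv_of_mul_eq_one_right (hμ x)
  have hsq : (α * β) ^ 2 = β ^ 2 := by
    have hc : Commute α β := hcomm
    rw [hc.mul_pow, hα, one_mul]
  have h2 : ∀ x : A, μ ((β ^ 2) x) = μ x := by
    intro x
    have : μ ((α * β) ((α * β) x)) = μ x := by
      rw [h1, h1, inv_inv]
    rw [← hsq]
    calc μ (((α * β) ^ 2) x) = μ ((α * β) ((α * β) x)) := by rw [sq]; rfl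
    _ = μ x := this
  have h2k : ∀ (k : ℕ) (x : A), μ (((β ^ 2) ^ k) x) = μ x := by
    intro k
    induction k with
    | zero => intro x; rfl
    | succ m ih =>
      intro x
      have : ((β ^ 2) ^ (m + 1)) x = ((β ^ 2) ^ m) ((β ^ 2) x) := by
        rw [pow_succ]; rfl
      rw [this, ih, h2]
  obtain ⟨m, hm⟩ := hn
  have hbeta : ∀ x : A, μ (β x) = μ x := by
    intro x
    have hpow : β = (β ^ 2) ^ (m + 1) := by
      rw [← pow_mul]
      have : 2 * (m + 1) = n + 1 := by omega
      rw [this, pow_succ, hβ, one_mul]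
    rw [hpow]; exact h2k (m + 1) x
  refine ⟨hbeta, fun x => ?_⟩
  have := h1 (β⁻¹ x)
  have hb : (α * β) (β⁻¹ x) = α x := by
    show α (β (β⁻¹ x)) = α x
    rw [MulAut.apply_inv_self]
  rw [hb] at this
  rw [this]
  congr 1
  have h3 := hbeta (β⁻¹ x)
  rw [MulAut.apply_inv_self] at h3
  exact h3.symm
end

section
/- Let χ : A → ℂˣ be a group homomorphism and suppose that for some i ∈ {1, 2} one has χ(x)·χ(α(βⁱ(x))) = 1 for every x ∈ A. Then χ(β(x)) = χ(x) for all x ∈ A, i.e. χ is β-invariant. -/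
theorem stmt_9 {A : Type*} [Group A] (α β : MulAut A)
    (hcomm : α * β = β * α) (hα : α ^ 2 = 1) (hβ : β ^ 3 = 1)
    (χ : A →* ℂˣ) (i : ℕ) (hi : i = 1 ∨ i = 2)
    (hχ : ∀ x : A, χ x * χ (α ((β ^ i) x)) = 1) :
    ∀ x : A, χ (β x) = χ x := by
  have hc : Commute α (β ^ i) := (Commute.pow_right hcomm i)
  have hinv : ∀ x : A, χ (α ((β ^ i) x)) = (χ x)⁻¹ := by
    intro x
    exact eq_inv_of_mul_eq_one_left (by rw [mul_comm]; exact hχ x)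
  have key : ∀ x : A, χ ((β ^ (2 * i)) x) = χ x := by
    intro x
    have h1 : χ (α ((β ^ i) (α ((β ^ i) x)))) = χ x := by
      rw [hinv, hinv, inv_inv]
    have h2 : α ((β ^ i) (α ((β ^ i) x))) = ((α * β ^ i) ^ 2) x := by
      simp [pow_two, MulAut.mul_apply]
    have h3 : (α * β ^ i) ^ 2 = β ^ (2 * i) := by
      rw [hc.mul_pow, hα, one_mul, ← pow_mul, mul_comm i 2]
    rw [h2, h3] at h1
    exact h1
  intro x
  rcases hi with rfl | rfl
  · -- χ(β² y) = χ y for all y; take y = β x, use β³ = 1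
    have := key (β x)
    have hb : (β ^ (2 * 1)) (β x) = x := by
      have : (β ^ (2 * 1)) (β x) = (β ^ 3) x := by
        simp [pow_succ, MulAut.mul_apply]
      rw [this, hβ]; rfl
    rw [hb] at this
    exact this.symm
  · -- χ(β⁴ x) = χ x, β⁴ = β
    have := key x
    have hb : (β ^ (2 * 2)) x = β x := by
      have h4 : β ^ (2 * 2) = β := by
        have : β ^ (2 * 2) = β ^ 3 * β := by rw [show 2 * 2 = 3 + 1 from rfl, pow_succ]
        rw [this, hβ, one_mul]
      rw [h4]
    rw [hb] at this
    exact this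
end

section
/- Let n be a positive integer and let a, b, c, d be complex numbers satisfying: (i) for every integer m ≥ 2 there exists ξ ∈ ℂ with ξⁿ = 1 and aᵐ + bᵐ = 2ξ; (ii) for every even integer m ≥ 2 there exists ζ ∈ ℂ with ζⁿ = 1 and cᵐ + dᵐ = 2ζ; (iii) a^{m−1}·c + b^{m−1}·d = 0 for every integer m ≥ 2. Then a = b, aⁿ = 1, c = −d, and c^{2n} = 1. -/
lemma aux_two_pow_ne (n : ℕ) (hn : 0 < n) : (2:ℂ)^n ≠ 1 := by
  intro h
  have h2 : ((2:ℕ):ℂ)^n = ((1:ℕ):ℂ) := by push_cast; simpa using h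
  have h3 : (2:ℕ)^n = 1 := by exact_mod_cast h2
  have h4 : 1 < (2:ℕ)^n := Nat.one_lt_two_pow_iff.mpr hn.ne'
  omega

lemma aux_no (n : ℕ) (hn : 0 < n) (x : ℂ)
    (h : ∀ m : ℕ, 2 ≤ m → ∃ ξ : ℂ, ξ ^ n = 1 ∧ x ^ m = 2 * ξ) : False := by
  obtain ⟨ξ2, hξ2, e2⟩ := h 2 le_rfl
  obtain ⟨ξ3, hξ3, e3⟩ := h 3 (by norm_num)
  have h2n : x ^ (2*n) = 2^n := by
    calc x^(2*n) = (x^2)^n := by rw [pow_mul]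
    _ = (2*ξ2)^n := by rw [e2]
    _ = 2^n := by rw [mul_pow, hξ2, mul_one]
  have h3n : x ^ (3*n) = 2^n := by
    calc x^(3*n) = (x^3)^n := by rw [pow_mul]
    _ = (2*ξ3)^n := by rw [e3]
    _ = 2^n := by rw [mul_pow, hξ3, mul_one]
  have hx : x^(3*n) = x^(2*n) * x^n := by rw [← pow_add]; congr 1; omega
  rw [h3n, h2n] at hx
  have hne : ((2:ℂ)^n) ≠ 0 := pow_ne_zero _ two_ne_zero
  have hxn : x^n = 1 := (mul_left_cancel₀ hne (by rw [mul_one]; exact hx)).symm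
  have : (2:ℂ)^n = 1 := by
    rw [← h2n, two_mul, pow_add, hxn, mul_one]
  exact aux_two_pow_ne n hn this

theorem stmt_11 (n : ℕ) (hn : 0 < n) (a b c d : ℂ)
    (h1 : ∀ m : ℕ, 2 ≤ m → ∃ ξ : ℂ, ξ ^ n = 1 ∧ a ^ m + b ^ m = 2 * ξ)
    (h2 : ∀ m : ℕ, 2 ≤ m → Even m → ∃ ζ : ℂ, ζ ^ n = 1 ∧ c ^ m + d ^ m = 2 * ζ)
    (h3 : ∀ m : ℕ, 2 ≤ m → a ^ (m - 1) * c + b ^ (m - 1) * d = 0) :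
    a = b ∧ a ^ n = 1 ∧ c = -d ∧ c ^ (2 * n) = 1 := by
  have e2 := h3 2 le_rfl
  have e3 := h3 3 (by norm_num)
  norm_num at e2 e3
  -- e2 : a * c + b * d = 0, e3 : a^2 * c + b^2 * d = 0
  have hab : a = b := by
    by_contra hab
    have hbd : b * d = 0 := by
      have h : (a - b) * (b * d) = 0 := by linear_combination a * e2 - e3
      rcases mul_eq_zero.mp h with h | h
      · exact absurd (sub_eq_zero.mp h) hab
      · exact h
    have hac : a * c = 0 := by
      have h : (b - a) * (a * c) = 0 := by linear_combination b * e2 - e3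
      rcases mul_eq_zero.mp h with h | h
      · exact absurd (sub_eq_zero.mp h).symm hab
      · exact h
    have ha0 : a ≠ 0 := by
      intro ha
      refine aux_no n hn b (fun m hm => ?_)
      obtain ⟨ξ, hξ, he⟩ := h1 m hm
      refine ⟨ξ, hξ, ?_⟩
      rw [← he, ha, zero_pow (by omega), zero_add]
    have hb0 : b ≠ 0 := by
      intro hb
      refine aux_no n hn a (fun m hm => ?_)
      obtain ⟨ξ, hξ, he⟩ := h1 m hm
      refine ⟨ξ, hξ, ?_⟩
      rw [← he, hb, zero_pow (by omega), add_zero]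
    have hc : c = 0 := by
      rcases mul_eq_zero.mp hac with h | h
      · exact absurd h ha0
      · exact h
    have hd : d = 0 := by
      rcases mul_eq_zero.mp hbd with h | h
      · exact absurd h hb0
      · exact h
    obtain ⟨ζ, hζ, he⟩ := h2 2 le_rfl (by norm_num)
    rw [hc, hd] at he
    norm_num at he
    rw [he] at hζ
    simp [zero_pow hn.ne'] at hζ
  subst hab
  obtain ⟨ξ2, hξ2, f2⟩ := h1 2 le_rfl
  obtain ⟨ξ3, hξ3, f3⟩ := h1 3 (by norm_num)
  have ha2 : a ^ 2 = ξ2 := by linear_combination f2 / 2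
  have ha3 : a ^ 3 = ξ3 := by linear_combination f3 / 2
  have h2n : a ^ (2*n) = 1 := by rw [pow_mul, ha2, hξ2]
  have h3n : a ^ (3*n) = 1 := by rw [pow_mul, ha3, hξ3]
  have ha0 : a ≠ 0 := by
    intro h; rw [h, zero_pow (by omega)] at h2n; exact one_ne_zero h2n.symm
  have han : a ^ n = 1 := by
    have : a ^ (3*n) = a ^ n * a ^ (2*n) := by rw [← pow_add]; ring_nf
    rw [h3n, h2n, mul_one] at this
    exact this.symm
  have hcd : c = -d := by
    have h : a * (c + d) = 0 := by linear_combination e2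
    rcases mul_eq_zero.mp h with h | h
    · exact absurd h ha0
    · exact eq_neg_of_add_eq_zero_left h
  obtain ⟨ζ, hζ, g2⟩ := h2 2 le_rfl (by norm_num)
  have hc2 : c ^ 2 = ζ := by
    rw [hcd] at g2 ⊢
    linear_combination g2 / 2
  refine ⟨rfl, han, hcd, ?_⟩
  rw [pow_mul, hc2, hζ]
end

section
/- The representation Π∘β of Gⁿ is equivalent to Π (i.e. there is a linear isomorphism T of V₁ ⊗ ⋯ ⊗ Vₙ with T∘Π(β(g)) = Π(g)∘T for all g ∈ Gⁿ) if and only if the representations ρ₁, …, ρₙ are pairwise equivalent. -/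
open scoped TensorProduct

/-!
If `T` intertwines `Π ∘ β` with `Π`, restrict to the copy of `G` sitting in slot `i`; `β` moves
slot `i + 1` to slot `i`. Putting a vector of `V (i + 1)` into slot `i + 1` of a fixed pure tensor
of nonzero vectors, applying `T`, and contracting the factors other than the `i`-th against a
linear form gives a `G`-map `V (i + 1) → V i`. Since `T` is injective, some linear form makes it
nonzero, and by Schur's lemma it is then an isomorphism. Going round the cycle `i ↦ i + 1` links
all the factors. Conversely, isomorphisms `V (i + 1) ≃ V i`, combined with reindexing the factors
along `β`, give `T`.
-/

namespace Representation

variable {k G V W : Type*} [Field k] [Group G] [AddCommGroup V] [Module k V]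
  [AddCommGroup W] [Module k W]

lemma isIrreducible_of_forall_submodule [Nontrivial V] {ρ : Representation k G V}
    (h : ∀ U : Submodule k V, (∀ (g : G) (x : V), x ∈ U → ρ g x ∈ U) → U = ⊥ ∨ U = ⊤) :
    ρ.IsIrreducible where
  exists_pair_ne := ⟨⊥, ⊤, fun h => bot_ne_top (congrArg Subrepresentation.toSubmodule h)⟩
  eq_bot_or_eq_top U := (h U.toSubmodule fun g _ hx => U.apply_mem_toSubmodule g hx).imp
    (Subrepresentation.toSubmodule_injective ·) (Subrepresentation.toSubmodule_injective ·)

lemma nonempty_equiv_iff_exists_linearEquiv {ρ : Representation k G V}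
    {σ : Representation k G W} :
    Nonempty (ρ.Equiv σ) ↔ ∃ e : V ≃ₗ[k] W, ∀ (g : G) (x : V), e (ρ g x) = σ g (e x) :=
  ⟨fun ⟨φ⟩ => ⟨φ.toLinearEquiv, φ.toIntertwiningMap.isIntertwining⟩,
    fun ⟨e, he⟩ => ⟨Equiv.mk e fun g => LinearMap.ext (he g)⟩⟩

lemma equivalence_nonempty_equiv {ι : Type*} {V : ι → Type*} [∀ i, AddCommGroup (V i)]
    [∀ i, Module k (V i)] (ρ : ∀ i, Representation k G (V i)) :
    _root_.Equivalence fun i j => Nonempty ((ρ i).Equiv (ρ j)) :=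
  ⟨fun _ => ⟨.refl _⟩, fun ⟨φ⟩ => ⟨φ.symm⟩, fun ⟨φ⟩ ⟨ψ⟩ => ⟨φ.trans ψ⟩⟩

lemma IsIrreducible.nonempty_equiv_of_ne_zero {ρ : Representation k G V}
    {σ : Representation k G W} [ρ.IsIrreducible] [σ.IsIrreducible] (f : V →ₗ[k] W)
    (hf : ∀ (g : G) (x : V), f (ρ g x) = σ g (f x)) (hf0 : f ≠ 0) : Nonempty (ρ.Equiv σ) := by
  let F : ρ.IntertwiningMap σ := f.intertwiningMap_of_isIntertwiningMap ρ σ hf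
  obtain hbij | hF := IsIrreducible.bijective_or_eq_zero F
  · exact ⟨F.ofBijective hbij⟩
  · exact absurd (congrArg IntertwiningMap.toLinearMap hF) hf0

end Representation

open Fin.NatCast in
lemma Fin.rel_of_rel_add_one {n : ℕ} [NeZero n] {r : Fin n → Fin n → Prop} (hr : Equivalence r)
    (h : ∀ i, r (i + 1) i) (i j : Fin n) : r i j := by
  have hsucc : ∀ m : ℕ, r i (i + (m : Fin n)) := by
    intro m
    induction m with
    | zero => simpa using hr.refl i
    | succ m ih => exact hr.trans ih (by simpa [add_assoc] using hr.symm (h (i + m)))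
  simpa using hsucc (j - i).val

namespace TensorProduct

variable {R A B : Type*} [CommSemiring R] [AddCommMonoid A] [Module R A] [AddCommMonoid B]
  [Module R B]

lemma exists_lid_rTensor_ne_zero [Module.Free R A] {z : A ⊗[R] B} (hz : z ≠ 0) :
    ∃ φ : Module.Dual R A, TensorProduct.lid R B (φ.rTensor B z) ≠ 0 := by
  let b := Module.Free.chooseBasis R A
  obtain ⟨c, hc⟩ : ∃ c, equivFinsuppOfBasisLeft b z c ≠ 0 := by
    by_contra! h
    exact hz ((equivFinsuppOfBasisLeft b).map_eq_zero_iff.mp (Finsupp.ext h))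
  exact ⟨b.coord c, by rwa [← equivFinsuppOfBasisLeft_apply]⟩

lemma lid_rTensor_lTensor (φ : Module.Dual R A) (f : B →ₗ[R] B) (z : A ⊗[R] B) :
    TensorProduct.lid R B (φ.rTensor B (f.lTensor A z)) =
      f (TensorProduct.lid R B (φ.rTensor B z)) := by
  induction z with
  | zero => simp
  | tmul a b => simp
  | add x y hx hy => simp [hx, hy]

end TensorProduct

namespace PiTensorProduct

variable {k ι : Type*} [Field k] [Fintype ι] {V : ι → Type*} [∀ i, AddCommGroup (V i)]
  [∀ i, Module k (V i)]

lemma tprod_ne_zero {v : ∀ i, V i} (hv : ∀ i, v i ≠ 0) : tprod k v ≠ 0 := by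
  choose φ hφ using fun i => Module.Projective.exists_dual_ne_zero k (hv i)
  intro h
  have := dualDistrib_apply φ v
  rw [h, map_zero] at this
  exact Finset.prod_ne_zero_iff.mpr (fun i _ => hφ i) this.symm

end PiTensorProduct

section PermutedTensor

open PiTensorProduct

variable {k G ι : Type*} [Field k] [Group G] {V : ι → Type*}
  [∀ i, AddCommGroup (V i)] [∀ i, Module k (V i)] {ρ : ∀ i, Representation k G (V i)}
  {P : Representation k (ι → G) (⨂[k] i, V i)}

lemma apply_mulSingle_tprod_update [DecidableEq ι]
    (hP : ∀ g v, P g (tprod k v) = tprod k fun i => ρ i (g i) (v i))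
    (j : ι) (h : G) (u : ∀ i, V i) (x : V j) :
    P (Pi.mulSingle j h) (tprod k (Function.update u j x))
      = tprod k (Function.update u j (ρ j h x)) := by
  rw [hP]
  congr 1
  funext i
  rcases eq_or_ne i j with rfl | hij
  · simp
  · simp [hij]

lemma equivPiTensorComplSingletonTensor_apply_mulSingle [DecidableEq ι]
    (hP : ∀ g v, P g (tprod k v) = tprod k fun i => ρ i (g i) (v i))
    (i : ι) (h : G) (x : ⨂[k] i, V i) :
    equivPiTensorComplSingletonTensor k V i (P (Pi.mulSingle i h) x)
      = (ρ i h).lTensor _ (equivPiTensorComplSingletonTensor k V i x) := by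
  induction x using PiTensorProduct.induction_on with
  | smul_tprod r v =>
    simp only [map_smul, hP, equivPiTensorComplSingletonTensor_tprod, LinearMap.lTensor_tmul,
      Pi.mulSingle_eq_same]
    congr 3
    funext j
    rw [Pi.mulSingle_eq_of_ne j.2, map_one, Module.End.one_apply]
  | add x y hx hy => simp only [map_add, hx, hy]

lemma nonempty_equiv_of_intertwiner_comp_perm [Fintype ι] [DecidableEq ι]
    [∀ i, Nontrivial (V i)] [∀ i, (ρ i).IsIrreducible]
    (hP : ∀ g v, P g (tprod k v) = tprod k fun i => ρ i (g i) (v i))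
    (σ : Equiv.Perm ι) (T : (⨂[k] i, V i) ≃ₗ[k] ⨂[k] i, V i)
    (hT : ∀ g x, T (P (g ∘ σ) x) = P g (T x)) (i : ι) :
    Nonempty ((ρ (σ.symm i)).Equiv (ρ i)) := by
  choose u hu using fun j => exists_ne (0 : V j)
  let e := equivPiTensorComplSingletonTensor k V i
  have hTu : e (T (tprod k u)) ≠ 0 := by simpa using tprod_ne_zero hu
  obtain ⟨φ, hφ⟩ := TensorProduct.exists_lid_rTensor_ne_zero hTu
  let f : V (σ.symm i) →ₗ[k] V i := (TensorProduct.lid k (V i)).toLinearMap ∘ₗ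
    φ.rTensor (V i) ∘ₗ e.toLinearMap ∘ₗ T.toLinearMap ∘ₗ
      (PiTensorProduct.tprod k).toLinearMap u (σ.symm i)
  refine Representation.IsIrreducible.nonempty_equiv_of_ne_zero f (fun h x => ?_) fun hf => hφ ?_
  · simp only [f, LinearMap.comp_apply, LinearEquiv.coe_coe, MultilinearMap.toLinearMap_apply]
    rw [← apply_mulSingle_tprod_update hP, ← Pi.mulSingle_comp_equiv, hT,
      equivPiTensorComplSingletonTensor_apply_mulSingle hP, TensorProduct.lid_rTensor_lTensor]
  · simpa [f] using LinearMap.congr_fun hf (u (σ.symm i))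

lemma exists_intertwiner_comp_perm
    (hP : ∀ g v, P g (tprod k v) = tprod k fun i => ρ i (g i) (v i))
    (σ : Equiv.Perm ι) (φ : ∀ i, (ρ (σ.symm i)).Equiv (ρ i)) :
    ∃ T : (⨂[k] i, V i) ≃ₗ[k] ⨂[k] i, V i, ∀ g x, T (P (g ∘ σ) x) = P g (T x) := by
  refine ⟨(reindex k V σ).trans (PiTensorProduct.congr fun i => (φ i).toLinearEquiv),
    fun g x => ?_⟩
  induction x using PiTensorProduct.induction_on with
  | smul_tprod r v =>
    simp only [map_smul, hP, LinearEquiv.trans_apply, reindex_tprod, congr_tprod,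
      Function.comp_apply, Equiv.apply_symm_apply]
    congr 2
    funext i
    exact Representation.IntertwiningMap.isIntertwining _ _ (φ i).toIntertwiningMap (g i) _
  | add x y hx hy => simp only [map_add, hx, hy]

end PermutedTensor

theorem stmt_13_general {G : Type*} [Group G] (n : ℕ) [NeZero n]
    (V : Fin n → Type*) [∀ i, AddCommGroup (V i)] [∀ i, Module ℂ (V i)]
    [∀ i, Nontrivial (V i)]
    (ρ : ∀ i, Representation ℂ G (V i))
    (hirr : ∀ (i : Fin n) (W : Submodule ℂ (V i)),
      (∀ (g : G) (x : V i), x ∈ W → ρ i g x ∈ W) → W = ⊥ ∨ W = ⊤)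
    (P : Representation ℂ (Fin n → G) (⨂[ℂ] i, V i))
    (hP : ∀ (g : Fin n → G) (v : (i : Fin n) → V i),
      P g (PiTensorProduct.tprod ℂ v) = PiTensorProduct.tprod ℂ (fun i => ρ i (g i) (v i))) :
    (∃ T : (⨂[ℂ] i, V i) ≃ₗ[ℂ] (⨂[ℂ] i, V i),
        ∀ (g : Fin n → G) (x : ⨂[ℂ] i, V i),
          T (P (fun i => g (i - 1)) x) = P g (T x)) ↔
      ∀ i j : Fin n, ∃ e : V i ≃ₗ[ℂ] V j,
        ∀ (g : G) (x : V i), e (ρ i g x) = ρ j g (e x) := by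
  have := fun i => Representation.isIrreducible_of_forall_submodule (hirr i)
  simp only [← Representation.nonempty_equiv_iff_exists_linearEquiv]
  constructor
  · rintro ⟨T, hT⟩
    -- `g ∘ Equiv.subRight 1` is `fun i => g (i - 1)`, and `(Equiv.subRight 1).symm i` is `i + 1`.
    refine Fin.rel_of_rel_add_one (Representation.equivalence_nonempty_equiv ρ) fun i => ?_
    exact nonempty_equiv_of_intertwiner_comp_perm hP (Equiv.subRight 1) T hT i
  · intro h
    exact exists_intertwiner_comp_perm hP (Equiv.subRight 1) fun i => (h _ _).some

theorem stmt_13 {G : Type*} [Group G] (n : ℕ) [NeZero n]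
    (V : Fin n → Type*) [∀ i, AddCommGroup (V i)] [∀ i, Module ℂ (V i)]
    [∀ i, FiniteDimensional ℂ (V i)] [∀ i, Nontrivial (V i)]
    (ρ : ∀ i, Representation ℂ G (V i))
    (hirr : ∀ (i : Fin n) (W : Submodule ℂ (V i)),
      (∀ (g : G) (x : V i), x ∈ W → ρ i g x ∈ W) → W = ⊥ ∨ W = ⊤)
    (P : Representation ℂ (Fin n → G) (⨂[ℂ] i, V i))
    (hP : ∀ (g : Fin n → G) (v : (i : Fin n) → V i),
      P g (PiTensorProduct.tprod ℂ v) = PiTensorProduct.tprod ℂ (fun i => ρ i (g i) (v i))) :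
    (∃ T : (⨂[ℂ] i, V i) ≃ₗ[ℂ] (⨂[ℂ] i, V i),
        ∀ (g : Fin n → G) (x : ⨂[ℂ] i, V i),
          T (P (fun i => g (i - 1)) x) = P g (T x)) ↔
      ∀ i j : Fin n, ∃ e : V i ≃ₗ[ℂ] V j,
        ∀ (g : G) (x : V i), e (ρ i g x) = ρ j g (e x) :=
  stmt_13_general n V ρ hirr P hP
end
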